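/- If an ordered field R has the Fixed Point Property for closed bounded intervals—every continuous map f : [a,b] → [a,b] with a ≤ b has a fixed point—then R is Dedekind complete. -/

import Mathlib

/-!
If `S` is nonempty and bounded above but has no supremum, then its set of upper bounds is clopen:
it is always closed, and it is open because every upper bound has a strictly smaller one. The
map sending this clopen set to a point `a ∈ S` and its complement to an upper bound `b` is
continuous, maps `[a, b]` into `{a, b}`, and has no fixed point.
-/

open Set

section UpperBounds

variable {α : Type*} [TopologicalSpace α]

theorem isClosed_upperBounds [Preorder α] [ClosedIciTopology α] (S : Set α) :
    IsClosed (upperBounds S) := by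
  have hS : upperBounds S = ⋂ s ∈ S, Ici s := by ext; simp [mem_upperBounds]
  exact hS ▸ isClosed_biInter fun s _ => isClosed_Ici

variable [LinearOrder α] {S : Set α}

theorem isOpen_upperBounds_of_forall_not_isLUB [ClosedIicTopology α] (hS : ∀ c, ¬IsLUB S c) :
    IsOpen (upperBounds S) := by
  refine isOpen_iff_mem_nhds.2 fun x hx => ?_
  obtain ⟨y, hy, hyx⟩ : ∃ y ∈ upperBounds S, y < x := by
    by_contra! h
    exact hS x ⟨hx, h⟩
  exact Filter.mem_of_superset (Ioi_mem_nhds hyx) fun z hz => upperBounds_mono_mem hz.le hy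

theorem isClopen_upperBounds_of_forall_not_isLUB [OrderClosedTopology α]
    (hS : ∀ c, ¬IsLUB S c) : IsClopen (upperBounds S) :=
  ⟨isClosed_upperBounds S, isOpen_upperBounds_of_forall_not_isLUB hS⟩

end UpperBounds

theorem IsClopen.mem_of_mem_of_forall_exists_fixedPoint {α : Type*} [Preorder α]
    [TopologicalSpace α]
    (hfix : ∀ (a b : α) (f : α → α), a ≤ b → ContinuousOn f (Icc a b) →
      MapsTo f (Icc a b) (Icc a b) → ∃ x ∈ Icc a b, f x = x)
    {U : Set α} (hU : IsClopen U) {a b : α} (hab : a ≤ b) (hb : b ∈ U) : a ∈ U := by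
  classical
  by_contra ha
  let f : α → α := U.piecewise (fun _ => a) (fun _ => b)
  have hf : Continuous f :=
    continuous_const.piecewise (by simp [hU.frontier_eq]) continuous_const
  have hmaps : MapsTo f (Icc a b) (Icc a b) := fun x _ => by
    by_cases hx : x ∈ U <;> simp [f, hx, hab]
  obtain ⟨x, -, hfx⟩ := hfix a b f hab hf.continuousOn hmaps
  by_cases hx : x ∈ U
  · have hax : a = x := by simpa [f, hx] using hfx
    exact ha (hax ▸ hx)
  · have hbx : b = x := by simpa [f, hx] using hfx
    exact hx (hbx ▸ hb)

theorem fixed_point_property_implies_dedekind_complete_general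
    {R : Type*} [LinearOrder R] [TopologicalSpace R] [OrderTopology R]
    (hfix : ∀ (a b : R) (f : R → R), a ≤ b → ContinuousOn f (Set.Icc a b) →
      Set.MapsTo f (Set.Icc a b) (Set.Icc a b) →
      ∃ x ∈ Set.Icc a b, f x = x) :
    ∀ S : Set R, S.Nonempty → BddAbove S → ∃ c : R, IsLUB S c := by
  rintro S ⟨a, haS⟩ ⟨b, hb⟩
  by_contra! hS
  have ha : a ∈ upperBounds S :=
    (isClopen_upperBounds_of_forall_not_isLUB hS).mem_of_mem_of_forall_exists_fixedPoint hfix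
      (hb haS) hb
  exact hS a (IsGreatest.isLUB ⟨haS, ha⟩)

theorem fixed_point_property_implies_dedekind_complete
    {R : Type*} [Field R] [LinearOrder R] [IsStrictOrderedRing R] [TopologicalSpace R] [OrderTopology R]
    (hfix : ∀ (a b : R) (f : R → R), a ≤ b → ContinuousOn f (Set.Icc a b) →
      Set.MapsTo f (Set.Icc a b) (Set.Icc a b) →
      ∃ x ∈ Set.Icc a b, f x = x) :
    ∀ S : Set R, S.Nonempty → BddAbove S → ∃ c : R, IsLUB S c :=
  fixed_point_property_implies_dedekind_complete_general hfix
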